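/- arXiv:2205.02006 — 8 statements merged into one kernel-verified Lean document; each statement's English description precedes it below -/
import Mathlib

section
/- Let G be an r-uniform hypergraph on Z_n consisting of all r-subsets whose element sum mod n lies in a fixed set {j_1,...,j_t} of t distinct residues. If H is an r-uniform hypergraph whose line graph L(H) has chromatic number at least t+1, then G is H-free. -/
/-- `G` contains no copy of the `r`-graph `H`. -/
def IsCopyFree {V W : Type*} [DecidableEq W]
    (H : Finset (Finset V)) (G : Finset (Finset W)) : Prop :=
  ¬ ∃ f : V → W, Function.Injective f ∧ ∀ e ∈ H, e.image f ∈ G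

/-- The line graph of an `r`-uniform hypergraph. -/
def lineGraph {V : Type*} [DecidableEq V] (r : ℕ) (H : Finset (Finset V)) :
    SimpleGraph {e // e ∈ H} where
  Adj e f := e ≠ f ∧ ((e : Finset V) ∩ (f : Finset V)).card = r - 1
  symm := by
    constructor
    intro e f h
    exact ⟨h.1.symm, by rw [Finset.inter_comm]; exact h.2⟩
  loopless := by
    constructor
    intro e h
    exact h.1 rfl

/-! A copy `f` of `H` in the sum-hypergraph maps `L(H)` homomorphically into the line graph of
the sum-hypergraph, and the latter is properly coloured by the element sum of an edge: two
`r`-sets `A ≠ B` sharing `r - 1` elements have sums `∑ (A ∩ B) + a` and `∑ (A ∩ B) + b`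
with `a ≠ b`. Hence `L(H)` would be `t`-colourable. -/

open Finset

theorem Finset.card_sdiff_eq_one_of_card_inter {α : Type*} [DecidableEq α] {r : ℕ}
    {A B : Finset α} (hA : #A = r) (hB : #B = r) (hAB : #(A ∩ B) = r - 1) (hne : A ≠ B) : #(A \ B) = 1 := by
  have hr : r ≠ 0 := by
    rintro rfl
    exact hne (by rw [card_eq_zero.mp hA, card_eq_zero.mp hB])
  have := card_sdiff_add_card_inter A B
  omega

section SumColoring

variable {M : Type*} [AddCancelCommMonoid M] [DecidableEq M]

theorem Finset.sum_ne_sum_of_card_sdiff_eq_one {A B : Finset M}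
    (hAB : #(A \ B) = 1) (hBA : #(B \ A) = 1) : ∑ i ∈ A, i ≠ ∑ i ∈ B, i := by
  obtain ⟨a, ha⟩ := card_eq_one.mp hAB
  obtain ⟨b, hb⟩ := card_eq_one.mp hBA
  have haB : a ∉ B := (mem_sdiff.mp (ha ▸ mem_singleton_self a)).2
  have hbB : b ∈ B := (mem_sdiff.mp (hb ▸ mem_singleton_self b)).1
  have hab : a ≠ b := fun h => haB (h ▸ hbB)
  intro hsum
  rw [← sum_inter_add_sum_sdiff A B, ← sum_inter_add_sum_sdiff B A, inter_comm B A, ha, hb,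
    sum_singleton, sum_singleton] at hsum
  exact hab (add_left_cancel hsum)

def lineGraphSumColoring {r : ℕ} (G : Finset (Finset M)) (s : Finset M)
    (hG : ∀ A ∈ G, #A = r) (hs : ∀ A ∈ G, ∑ i ∈ A, i ∈ s) : (lineGraph r G).Coloring s :=
  SimpleGraph.Coloring.mk (fun A => ⟨∑ i ∈ A.1, i, hs A.1 A.2⟩) fun {A B} ⟨hne, hAB⟩ hsum => by
    have hA := hG A.1 A.2
    have hB := hG B.1 B.2
    have hne' : A.1 ≠ B.1 := Subtype.coe_injective.ne hne
    refine Finset.sum_ne_sum_of_card_sdiff_eq_one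
      (card_sdiff_eq_one_of_card_inter hA hB hAB hne')
      (card_sdiff_eq_one_of_card_inter hB hA (by rwa [inter_comm]) hne'.symm)
      (congrArg Subtype.val hsum)

theorem lineGraph_colorable_of_sum_mem {r : ℕ} (G : Finset (Finset M)) (s : Finset M)
    (hG : ∀ A ∈ G, #A = r) (hs : ∀ A ∈ G, ∑ i ∈ A, i ∈ s) : (lineGraph r G).Colorable #s := by
  simpa using (lineGraphSumColoring G s hG hs).colorable

end SumColoring

def lineGraphHomOfCopy {V W : Type*} [DecidableEq V] [DecidableEq W] (r : ℕ)
    {H : Finset (Finset V)} {G : Finset (Finset W)} (f : V → W) (hf : Function.Injective f)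
    (hcopy : ∀ e ∈ H, e.image f ∈ G) : lineGraph r H →g lineGraph r G where
  toFun e := ⟨e.1.image f, hcopy e.1 e.2⟩
  map_rel' := fun {e e'} ⟨hne, hcard⟩ =>
    ⟨fun h => hne (Subtype.ext (image_injective hf (congrArg Subtype.val h))),
      by rw [← image_inter _ _ hf, card_image_of_injective _ hf, hcard]⟩

theorem statement2_general (n r t : ℕ) [NeZero n] (s : Finset (ZMod n)) (hs : s.card = t)
    {V : Type*} [DecidableEq V] (H : Finset (Finset V))
    (hchi : ((t + 1 : ℕ) : ℕ∞) ≤ (lineGraph r H).chromaticNumber) :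
    IsCopyFree H ((Finset.univ.powersetCard r).filter
      (fun A : Finset (ZMod n) => (∑ i ∈ A, i) ∈ s)) := by
  rintro ⟨f, hf, hcopy⟩
  have hcol : (lineGraph r H).Colorable t := by
    refine hs ▸ (lineGraph_colorable_of_sum_mem _ s ?_ ?_).of_hom (lineGraphHomOfCopy r f hf hcopy)
    · exact fun A hA => (mem_powersetCard.mp (mem_filter.mp hA).1).2
    · exact fun A hA => (mem_filter.mp hA).2
  have := hchi.trans hcol.chromaticNumber_le
  exact absurd (Nat.cast_le.mp this) (by omega)

/-- the `r`-graph on `ℤ/n` of all `r`-subsets whose element sum lies in a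
fixed set `s` of `t` distinct residues is `H`-free whenever `χ(L(H)) ≥ t + 1`. -/
theorem statement2 (n r t : ℕ) [NeZero n] (s : Finset (ZMod n)) (hs : s.card = t)
    {V : Type*} [Fintype V] [DecidableEq V] (H : Finset (Finset V))
    (hH : ∀ e ∈ H, e.card = r)
    (hchi : ((t + 1 : ℕ) : ℕ∞) ≤ (lineGraph r H).chromaticNumber) :
    IsCopyFree H ((Finset.univ.powersetCard r).filter
      (fun A : Finset (ZMod n) => (∑ i ∈ A, i) ∈ s)) :=
  statement2_general n r t s hs H hchi
end

section
/- For every r ≥ 2, the quantity π_r = max over positive integers n of n^{-(r+1)}·r!·C(n,r) satisfies (2/e)/(r²+r) ≤ π_r ≤ (2/e)/(r²−r). -/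
open Finset Real

private lemma st5_cast_desc (r n : ℕ) :
    ((r.factorial * n.choose r : ℕ) : ℝ) = ∏ j ∈ range r, ((n - j : ℕ) : ℝ) := by
  rw [← Nat.descFactorial_eq_factorial_mul_choose, Nat.descFactorial_eq_prod_range,
    Nat.cast_prod]

private lemma st5_sum_id (r : ℕ) :
    (∑ j ∈ range r, (j : ℝ)) = ((r : ℝ) ^ 2 - r) / 2 := by
  induction r with
  | zero => simp
  | succ k ih =>
    rw [Finset.sum_range_succ, ih]
    push_cast
    ring

/-- pointwise upper bound -/
private lemma st5_upper (r : ℕ) (hr : 2 ≤ r) (n : ℕ) (hn : 0 < n) :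
    ((r.factorial * n.choose r : ℕ) : ℝ) / (n : ℝ) ^ (r + 1) ≤
      (2 / Real.exp 1) / ((r : ℝ) ^ 2 - r) := by
  have hr' : (2 : ℝ) ≤ r := by exact_mod_cast hr
  have hn' : (0 : ℝ) < n := by exact_mod_cast hn
  set c : ℝ := ((r : ℝ) ^ 2 - r) / 2 with hc
  have hcpos : 0 < c := by rw [hc]; nlinarith
  have h1 : ((r.factorial * n.choose r : ℕ) : ℝ) ≤ (n : ℝ) ^ r * Real.exp (-(c / n)) := by
    rw [st5_cast_desc]
    have hb : ∀ j ∈ range r, ((n - j : ℕ) : ℝ) ≤ (n : ℝ) * Real.exp (-((j : ℝ) / n)) := by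
      intro j _
      rcases le_or_gt n j with h | h
      · rw [Nat.sub_eq_zero_of_le h, Nat.cast_zero]
        positivity
      · rw [Nat.cast_sub h.le]
        have h2 := Real.add_one_le_exp (-((j : ℝ) / n))
        have : 1 - (j : ℝ) / n ≤ Real.exp (-((j : ℝ) / n)) := by linarith
        have h3 := mul_le_mul_of_nonneg_left this hn'.le
        calc (n : ℝ) - j = n * (1 - (j : ℝ) / n) := by field_simp
          _ ≤ n * Real.exp (-((j : ℝ) / n)) := h3
    calc ∏ j ∈ range r, ((n - j : ℕ) : ℝ)
        ≤ ∏ j ∈ range r, ((n : ℝ) * Real.exp (-((j : ℝ) / n))) :=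
          Finset.prod_le_prod (fun j _ => by positivity) hb
      _ = (n : ℝ) ^ r * Real.exp (-(c / n)) := by
          rw [Finset.prod_mul_distrib, Finset.prod_const, card_range, ← Real.exp_sum]
          congr 2
          rw [Finset.sum_neg_distrib, ← Finset.sum_div, st5_sum_id r, hc]
  have h2 : Real.exp (-(c / n)) / n ≤ 1 / (Real.exp 1 * c) := by
    have he : (0 : ℝ) < Real.exp (c / n) := Real.exp_pos _
    have h4 := Real.add_one_le_exp (c / n - 1)
    rw [Real.exp_sub] at h4
    have h5 : c / n ≤ Real.exp (c / n) / Real.exp 1 := by linarith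
    rw [div_le_div_iff₀ hn' (Real.exp_pos 1)] at h5
    rw [div_le_div_iff₀ hn' (by positivity), Real.exp_neg, inv_mul_eq_div, div_le_iff₀ he]
    nlinarith
  calc ((r.factorial * n.choose r : ℕ) : ℝ) / (n : ℝ) ^ (r + 1)
      ≤ ((n : ℝ) ^ r * Real.exp (-(c / n))) / (n : ℝ) ^ (r + 1) := by
        apply div_le_div_of_nonneg_right h1 (by positivity) |>.trans_eq rfl
    _ = Real.exp (-(c / n)) / n := by
        rw [pow_succ]
        field_simp
    _ ≤ 1 / (Real.exp 1 * c) := h2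
    _ = (2 / Real.exp 1) / ((r : ℝ) ^ 2 - r) := by
        rw [hc]
        have : (r : ℝ) ^ 2 - r ≠ 0 := by nlinarith
        field_simp
  done

private lemma st5_lower (r : ℕ) (hr : 2 ≤ r) :
    (2 / Real.exp 1) / ((r : ℝ) ^ 2 + r) ≤
      ((r.factorial * (r * (r + 1) / 2).choose r : ℕ) : ℝ) /
        ((r * (r + 1) / 2 : ℕ) : ℝ) ^ (r + 1) := by
  have hr' : (2 : ℝ) ≤ r := by exact_mod_cast hr
  set m : ℕ := r * (r + 1) / 2 with hm
  have hm2 : m * 2 = r * (r + 1) := Nat.div_mul_cancel (Nat.even_mul_succ_self r).two_dvd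
  have hrm : r ≤ m := by nlinarith [hm2]
  have hN : (m : ℝ) = ((r : ℝ) ^ 2 + r) / 2 := by
    have h := congrArg (fun k : ℕ => (k : ℝ)) hm2
    push_cast at h
    nlinarith [h]
  have hNpos : (0 : ℝ) < m := by rw [hN]; nlinarith
  have key : ∀ j ∈ range r, (m : ℝ) * Real.exp (-(((j : ℝ) + 1) / m)) ≤ ((m - j : ℕ) : ℝ) := by
    intro j hj
    rw [mem_range] at hj
    have hjr : (j : ℝ) ≤ (r : ℝ) - 1 := by
      have : (j : ℝ) + 1 ≤ r := by exact_mod_cast hj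
      linarith
    have hj0 : (0 : ℝ) ≤ j := Nat.cast_nonneg j
    rw [Nat.cast_sub (le_trans hj.le hrm)]
    set y : ℝ := ((j : ℝ) + 1) / m with hy
    have hy0 : 0 ≤ y := by positivity
    have hexp := Real.quadratic_le_exp_of_nonneg hy0
    have hey : (0 : ℝ) < Real.exp y := Real.exp_pos _
    have hmj : (0 : ℝ) < (m : ℝ) - j := by nlinarith
    rw [Real.exp_neg, mul_inv_le_iff₀ hey]
    have hpoly : (m : ℝ) ≤ ((m : ℝ) - j) * (1 + y + y ^ 2 / 2) := by
      rw [hy]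
      have h2N : 2 * (m : ℝ) = (r : ℝ) ^ 2 + r := by rw [hN]; ring
      rw [← sub_nonneg]
      have hexpand : ((m : ℝ) - j) * (1 + ((j : ℝ) + 1) / m + (((j : ℝ) + 1) / m) ^ 2 / 2) - m
          = (2 * (m : ℝ) ^ 2 - 2 * m * (j : ℝ) * ((j : ℝ) + 1) + ((j : ℝ) + 1) ^ 2 * ((m : ℝ) - j))
            / (2 * (m : ℝ) ^ 2) := by
        field_simp
        ring
      rw [hexpand]
      apply div_nonneg _ (by positivity)
      nlinarith [sq_nonneg ((r : ℝ) - 1 - j), sq_nonneg ((j : ℝ) + 1), mul_nonneg (sub_nonneg.2 hjr) hj0, sq_nonneg ((r : ℝ) - 1)]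
    calc (m : ℝ) ≤ ((m : ℝ) - j) * (1 + y + y ^ 2 / 2) := hpoly
      _ ≤ ((m : ℝ) - j) * Real.exp y := mul_le_mul_of_nonneg_left hexp hmj.le
  have h1 : (m : ℝ) ^ r * Real.exp (-1) ≤ ((r.factorial * m.choose r : ℕ) : ℝ) := by
    rw [st5_cast_desc]
    calc (m : ℝ) ^ r * Real.exp (-1)
        = ∏ j ∈ range r, ((m : ℝ) * Real.exp (-(((j : ℝ) + 1) / m))) := by
          rw [Finset.prod_mul_distrib, Finset.prod_const, card_range, ← Real.exp_sum]
          congr 2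
          rw [Finset.sum_neg_distrib, ← Finset.sum_div, Finset.sum_add_distrib,
            st5_sum_id r, Finset.sum_const, card_range, nsmul_eq_mul, mul_one, hN]
          have hrne : ((r : ℝ) ^ 2 + r) / 2 ≠ 0 := by nlinarith
          field_simp
          ring
      _ ≤ ∏ j ∈ range r, ((m - j : ℕ) : ℝ) :=
          Finset.prod_le_prod (fun j _ => by positivity) key
  have hden : (r : ℝ) ^ 2 + r ≠ 0 := by nlinarith
  have hstep : (2 / Real.exp 1) / ((r : ℝ) ^ 2 + r) = Real.exp (-1) / m := by
    rw [hN, Real.exp_neg]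
    field_simp
  calc (2 / Real.exp 1) / ((r : ℝ) ^ 2 + r) = Real.exp (-1) / m := hstep
    _ = ((m : ℝ) ^ r * Real.exp (-1)) / (m : ℝ) ^ (r + 1) := by
        rw [pow_succ]
        field_simp
    _ ≤ ((r.factorial * m.choose r : ℕ) : ℝ) / (m : ℝ) ^ (r + 1) :=
        div_le_div_of_nonneg_right h1 (by positivity) |>.trans_eq rfl

/-- for `r ≥ 2`, `π_r = max_n n^{-(r+1)} r! C(n,r)` satisfies
`(2/e)/(r²+r) ≤ π_r ≤ (2/e)/(r²−r)`. -/
theorem statement5 (r : ℕ) (hr : 2 ≤ r) :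
    (2 / Real.exp 1) / ((r : ℝ) ^ 2 + r) ≤
      (⨆ n : ℕ+, ((r.factorial * (n : ℕ).choose r : ℕ) : ℝ) / ((n : ℕ) : ℝ) ^ (r + 1)) ∧
    (⨆ n : ℕ+, ((r.factorial * (n : ℕ).choose r : ℕ) : ℝ) / ((n : ℕ) : ℝ) ^ (r + 1)) ≤
      (2 / Real.exp 1) / ((r : ℝ) ^ 2 - r) := by
  have hub : ∀ n : ℕ+,
      ((r.factorial * (n : ℕ).choose r : ℕ) : ℝ) / ((n : ℕ) : ℝ) ^ (r + 1) ≤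
        (2 / Real.exp 1) / ((r : ℝ) ^ 2 - r) := fun n => st5_upper r hr n n.2
  have hbdd : BddAbove (Set.range fun n : ℕ+ =>
      ((r.factorial * (n : ℕ).choose r : ℕ) : ℝ) / ((n : ℕ) : ℝ) ^ (r + 1)) :=
    ⟨_, Set.forall_mem_range.2 hub⟩
  constructor
  · have hmpos : 0 < r * (r + 1) / 2 :=
      Nat.div_pos (by nlinarith) (by norm_num)
    exact (st5_lower r hr).trans (le_ciSup hbdd ⟨r * (r + 1) / 2, hmpos⟩)
  · exact ciSup_le hub
end

section
/- For all n ≥ r ≥ 2, (1/r)·∑_{d=0}^{⌊n/r⌋−1} C(n−1−r·d, r−1) ≥ (1/r²)·C(n,r). -/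
open Finset

lemma hockey_range (r : ℕ) : ∀ n : ℕ, ∑ k ∈ Finset.range n, k.choose r = n.choose (r + 1) := by
  intro n
  induction n with
  | zero => simp
  | succ n ih =>
    rw [Finset.sum_range_succ, ih, Nat.choose_succ_succ' (n) (r)]
    omega

lemma blocks {M : Type*} [AddCommMonoid M] (f : ℕ → M) (r q : ℕ) :
    ∑ j ∈ Finset.range (r * q), f j
      = ∑ d ∈ Finset.range q, ∑ i ∈ Finset.range r, f (r * d + i) := by
  induction q with
  | zero => simp
  | succ q ih =>
    rw [Nat.mul_succ, Finset.sum_range_add, ih, Finset.sum_range_succ]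

lemma key (n r : ℕ) (hr : 2 ≤ r) (hrn : r ≤ n) :
    n.choose r ≤ r * ∑ d ∈ Finset.range (n / r), ((n - 1 - r * d).choose (r - 1)) := by
  set q := n / r with hq
  set s := n % r with hs
  have hr0 : 0 < r := by omega
  have hn : r * q + s = n := Nat.div_add_mod n r
  have hsr : s < r := Nat.mod_lt _ hr0
  have hq1 : 1 ≤ q := (Nat.one_le_div_iff hr0).2 hrn
  have hr1 : r - 1 + 1 = r := by omega
  -- hockey stick
  have h1 : n.choose r = ∑ k ∈ Finset.range n, k.choose (r - 1) := by
    rw [hockey_range, hr1]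
  -- split off first s (zero) terms
  have h2 : ∑ k ∈ Finset.range n, k.choose (r - 1)
      = ∑ j ∈ Finset.range (r * q), (s + j).choose (r - 1) := by
    have hz : ∑ k ∈ Finset.range s, k.choose (r - 1) = 0 := by
      apply Finset.sum_eq_zero
      intro k hk
      simp only [Finset.mem_range] at hk
      exact Nat.choose_eq_zero_of_lt (by omega)
    rw [show n = s + r * q from by omega, Finset.sum_range_add, hz, zero_add]
  -- group into blocks of r
  have h3 : ∑ j ∈ Finset.range (r * q), (s + j).choose (r - 1)
      = ∑ d ∈ Finset.range q, ∑ i ∈ Finset.range r, (s + (r * d + i)).choose (r - 1) :=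
    blocks _ r q
  -- bound each block by r times its largest term
  have h4 : ∑ d ∈ Finset.range q, ∑ i ∈ Finset.range r, (s + (r * d + i)).choose (r - 1)
      ≤ ∑ d ∈ Finset.range q, r * (s + r * d + (r - 1)).choose (r - 1) := by
    apply Finset.sum_le_sum
    intro d _
    calc ∑ i ∈ Finset.range r, (s + (r * d + i)).choose (r - 1)
        ≤ ∑ _i ∈ Finset.range r, (s + r * d + (r - 1)).choose (r - 1) := by
          apply Finset.sum_le_sum
          intro i hi
          simp only [Finset.mem_range] at hi
          exact Nat.choose_le_choose _ (by omega)
      _ = r * (s + r * d + (r - 1)).choose (r - 1) := by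
          rw [Finset.sum_const, Finset.card_range, smul_eq_mul]
  -- reflect the sum
  have h5 : ∑ d ∈ Finset.range q, (s + r * d + (r - 1)).choose (r - 1)
      = ∑ d ∈ Finset.range q, (n - 1 - r * d).choose (r - 1) := by
    rw [← Finset.sum_range_reflect (fun d => (n - 1 - r * d).choose (r - 1)) q]
    apply Finset.sum_congr rfl
    intro d hd
    simp only [Finset.mem_range] at hd
    congr 1
    have hmul : r * (q - 1 - d) + (r * d + r) = r * q := by
      have : (q - 1 - d) + (d + 1) = q := by omega
      calc r * (q - 1 - d) + (r * d + r) = r * ((q - 1 - d) + (d + 1)) := by ring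
        _ = r * q := by rw [this]
    omega
  calc n.choose r = ∑ j ∈ Finset.range (r * q), (s + j).choose (r - 1) := by rw [h1, h2]
    _ = _ := h3
    _ ≤ ∑ d ∈ Finset.range q, r * (s + r * d + (r - 1)).choose (r - 1) := h4
    _ = r * ∑ d ∈ Finset.range q, (s + r * d + (r - 1)).choose (r - 1) := by
        rw [Finset.mul_sum]
    _ = r * ∑ d ∈ Finset.range q, (n - 1 - r * d).choose (r - 1) := by rw [h5]

/-- for `n ≥ r ≥ 2`,
`(1/r)·∑_{d=0}^{⌊n/r⌋−1} C(n−1−rd, r−1) ≥ (1/r²)·C(n,r)`. -/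
theorem statement11 (n r : ℕ) (hr : 2 ≤ r) (hrn : r ≤ n) :
    (1 / (r : ℝ) ^ 2) * (n.choose r : ℝ) ≤
      (1 / (r : ℝ)) * ∑ d ∈ Finset.range (n / r), ((n - 1 - r * d).choose (r - 1) : ℝ) := by
  have hr0 : (0 : ℝ) < r := by
    have : 0 < r := by omega
    exact_mod_cast this
  have hkey : (n.choose r : ℝ)
      ≤ r * ∑ d ∈ Finset.range (n / r), ((n - 1 - r * d).choose (r - 1) : ℝ) := by
    have := key n r hr hrn
    push_cast at this ⊢
    exact_mod_cast this
  calc (1 / (r : ℝ) ^ 2) * (n.choose r : ℝ)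
      ≤ (1 / (r : ℝ) ^ 2) * (r * ∑ d ∈ Finset.range (n / r),
          ((n - 1 - r * d).choose (r - 1) : ℝ)) := by
        apply mul_le_mul_of_nonneg_left hkey
        positivity
    _ = (1 / (r : ℝ)) * ∑ d ∈ Finset.range (n / r),
          ((n - 1 - r * d).choose (r - 1) : ℝ) := by
        field_simp
end

section
/- Let H_3^r be the r-uniform hypergraph with r+1 vertices and 3 edges. Then for every n ≥ r, ex(n, H_3^r) ≥ (1/n)·C(n,r) + (1/r)·∑_{d=0}^{⌊n/r⌋−1} C(n−1−r·d, r−1), and consequently ex(n, H_3^r) ≥ (1/r²)·C(n,r). -/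
/-- `G` contains no copy of `H_k^r`, the `r`-uniform hypergraph with `r+1` vertices
and `k` edges: no set `B` of `r+1` vertices contains `k` vertices `z` with all the
sets `B \ {z}` being edges of `G`. -/
def DaisyFree (r k : ℕ) {V : Type*} [DecidableEq V] (G : Finset (Finset V)) : Prop :=
  ¬ ∃ B : Finset V, B.card = r + 1 ∧ ∃ Z ⊆ B, Z.card = k ∧ ∀ z ∈ Z, B.erase z ∈ G

/-!
Every `r`-set `A ⊆ ℤ_n` lies in exactly `d₂(A) + 1` of the `n` graphs `G(n, r, 2, j)`, so some `j`
gives an `H_3^r`-free graph with at least `(C(n, r) + ∑_A d₂(A)) / n` edges. Since `r·d₂(A) ≤ n`,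
`∑_A d₂(A) = ∑_{d < n/r} #{A : d₂(A) > d}`, and `n·C(n-1-rd, r-1) ≤ r·#{A : d₂(A) > d}`: through
each vertex `a` pass the distinct sets `a + S`, where `S` is `{0} ∪ (T + 1)` with its `i`-th element
moved up by `i·d`, for the `(r-1)`-subsets `T` of `[0, n-1-rd)`. Finally the hockey stick identity
gives `C(n, r) ≤ r·∑_{d < n/r} C(n-1-rd, r-1)`, which turns the first bound into the second.
-/

open Finset
open Fin.NatCast Fin.CommRing

section CircularGap

variable {n : ℕ}

/-- The minimum circular gap `d₂(A)`; it is `0` when `A` has fewer than two elements. -/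
noncomputable def minCircGap (A : Finset (Fin n)) : ℕ :=
  sInf {g | ∃ x ∈ A, ∃ y ∈ A, x ≠ y ∧ (y - x).val = g}

lemma minCircGap_le {A : Finset (Fin n)} {x y : Fin n} (hx : x ∈ A) (hy : y ∈ A) (hxy : x ≠ y) :
    minCircGap A ≤ (y - x).val :=
  Nat.sInf_le ⟨x, hx, y, hy, hxy, rfl⟩

lemma exists_minCircGap_eq {A : Finset (Fin n)} (hA : 1 < #A) :
    ∃ x ∈ A, ∃ y ∈ A, x ≠ y ∧ (y - x).val = minCircGap A := by
  obtain ⟨x, hx, y, hy, hxy⟩ := one_lt_card.mp hA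
  exact Nat.sInf_mem (s := {g | ∃ x ∈ A, ∃ y ∈ A, x ≠ y ∧ (y - x).val = g})
    ⟨_, x, hx, y, hy, hxy, rfl⟩

lemma minCircGap_lt [NeZero n] (A : Finset (Fin n)) : minCircGap A < n := by
  rcases Set.eq_empty_or_nonempty {g | ∃ x ∈ A, ∃ y ∈ A, x ≠ y ∧ (y - x).val = g} with h | h
  · rw [minCircGap, h, Nat.sInf_empty]
    exact Nat.pos_of_neZero n
  · obtain ⟨x, -, y, -, -, hg⟩ := Nat.sInf_mem h
    exact (congrArg (· < n) hg).mp (y - x).isLt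

lemma minCircGap_le_max [NeZero n] {A : Finset (Fin n)} {a b : Fin n} (ha : a ∈ A) (hb : b ∈ A)
    (hab : a ≠ b) (s : Fin n) : minCircGap A ≤ max (s - a).val (s - b).val := by
  wlog h : (s - a).val ≤ (s - b).val generalizing a b
  · rw [max_comm]
    exact this hb ha hab.symm (by omega)
  calc minCircGap A ≤ (a - b).val := minCircGap_le hb ha hab.symm
    _ = ((s - b) - (s - a)).val := by rw [show s - b - (s - a) = a - b by ring]
    _ ≤ max (s - a).val (s - b).val := by
      rw [Fin.sub_val_of_le (Fin.le_def.mpr h)]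
      omega

lemma val_natCast_sub_natCast [NeZero n] {u v : ℕ} (hvu : v ≤ u) (hu : u < n) :
    ((u : Fin n) - (v : Fin n)).val = u - v := by
  rw [← Nat.cast_sub hvu, Fin.val_cast_of_lt (by omega)]

/-- The arcs `{x, x + 1, …, x + g - 1}` for `x ∈ A`, `g = d₂(A)`, are pairwise disjoint. -/
lemma card_mul_minCircGap_le [NeZero n] (A : Finset (Fin n)) : #A * minCircGap A ≤ n := by
  have key : ∀ x ∈ A, ∀ y ∈ A, ∀ u v : ℕ, u < minCircGap A → v ≤ u →
      x + (u : Fin n) = y + v → x = y ∧ u = v := by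
    intro x hx y hy u v hu hvu h
    have hun : u < n := hu.trans (minCircGap_lt A)
    by_cases hxy : x = y
    · subst hxy
      have := congrArg Fin.val (add_left_cancel h)
      rw [Fin.val_cast_of_lt hun, Fin.val_cast_of_lt (by omega)] at this
      exact ⟨rfl, this⟩
    · have hdiff : y - x = (u : Fin n) - v := sub_eq_sub_iff_add_eq_add.mpr (by rw [← h, add_comm])
      have := minCircGap_le hx hy hxy
      rw [hdiff, val_natCast_sub_natCast hvu hun] at this
      omega
  have hinj :
      Set.InjOn (fun p : Fin n × ℕ => p.1 + (p.2 : Fin n)) ↑(A ×ˢ range (minCircGap A)) := by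
    rintro ⟨x, u⟩ hxu ⟨y, v⟩ hyv h
    simp only [coe_product, Set.mem_prod, mem_coe, mem_range] at hxu hyv h
    rcases le_total v u with hvu | huv
    · obtain ⟨rfl, rfl⟩ := key x hxu.1 y hyv.1 u v hxu.2 hvu h
      rfl
    · obtain ⟨rfl, rfl⟩ := key y hyv.1 x hxu.1 v u hyv.2 huv h.symm
      rfl
  simpa using card_le_card_of_injOn (t := univ) _ (fun _ _ => mem_coe.mpr (mem_univ _)) hinj

/-- The `r`-graph `G(n, r, 2, j)`. -/
noncomputable def gapGraph [NeZero n] (r : ℕ) (j : Fin n) : Finset (Finset (Fin n)) :=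
  {A ∈ powersetCard r univ | (j + ∑ x ∈ A, x).val ≤ minCircGap A}

lemma card_of_mem_gapGraph [NeZero n] {r : ℕ} {j : Fin n} {A : Finset (Fin n)}
    (hA : A ∈ gapGraph r j) : #A = r :=
  (mem_powersetCard.mp (mem_filter.mp hA).1).2

/-- With `s = j + ∑ B`, the edge `B \ {z}` needs `s - z ≤ d₂(B \ {z})`. For the `z = c` maximising
`s - z`, two further removable vertices `a, b ∈ B \ {c}` force `d₂(B \ {c}) < s - c`. -/
lemma daisyFree_gapGraph [NeZero n] (r : ℕ) (j : Fin n) : DaisyFree r 3 (gapGraph r j) := by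
  rintro ⟨B, -, Z, hZB, hZ, hedge⟩
  set s := j + ∑ x ∈ B, x
  have hgap : ∀ z ∈ Z, (s - z).val ≤ minCircGap (B.erase z) := by
    intro z hz
    have := (mem_filter.mp (hedge z hz)).2
    rwa [sum_erase_eq_sub (hZB hz), ← add_sub_assoc] at this
  obtain ⟨c, hc, hmax⟩ := exists_max_image Z (fun z => (s - z).val) (card_pos.mp (by omega))
  have hlt : ∀ z ∈ Z.erase c, (s - z).val < (s - c).val := fun z hz =>
    (hmax z (mem_of_mem_erase hz)).lt_of_ne fun h =>
      ne_of_mem_erase hz (sub_right_injective (Fin.val_injective h))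
  obtain ⟨a, ha, b, hb, hab⟩ :=
    one_lt_card.mp (show 1 < #(Z.erase c) by rw [card_erase_of_mem hc]; omega)
  have hsmall := minCircGap_le_max (erase_subset_erase c hZB ha) (erase_subset_erase c hZB hb) hab s
  exact (hsmall.trans_lt (max_lt (hlt a ha) (hlt b hb))).not_ge (hgap c hc)

lemma card_filter_val_add_le [NeZero n] (s : Fin n) {m : ℕ} (hm : m < n) :
    #{j : Fin n | (j + s).val ≤ m} = m + 1 := by
  calc #{j : Fin n | (j + s).val ≤ m} = #{i : Fin n | i.val < m + 1} :=
        card_equiv (Equiv.addRight s) fun j => by simp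
    _ = m + 1 := by rw [Fin.card_filter_val_lt]; omega

lemma sum_card_gapGraph [NeZero n] (r : ℕ) :
    ∑ j : Fin n, #(gapGraph r j) =
      ∑ A ∈ powersetCard r (univ : Finset (Fin n)), (minCircGap A + 1) := by
  simp_rw [gapGraph, card_filter]
  rw [sum_comm]
  refine sum_congr rfl fun A _ => ?_
  rw [← card_filter, card_filter_val_add_le _ (minCircGap_lt A)]

lemma exists_choose_add_sum_minCircGap_le [NeZero n] (r : ℕ) : ∃ j : Fin n,
    n.choose r + ∑ A ∈ powersetCard r (univ : Finset (Fin n)), minCircGap A ≤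
      n * #(gapGraph r j) := by
  obtain ⟨j, -, hj⟩ := exists_max_image univ (fun j : Fin n => #(gapGraph r j)) univ_nonempty
  refine ⟨j, ?_⟩
  calc n.choose r + ∑ A ∈ powersetCard r (univ : Finset (Fin n)), minCircGap A
      = ∑ i : Fin n, #(gapGraph r i) := by
        rw [sum_card_gapGraph, sum_add_distrib, sum_const, card_powersetCard, card_univ,
          Fintype.card_fin, smul_eq_mul, mul_one, add_comm]
    _ ≤ n * #(gapGraph r j) := by
        simpa using sum_le_card_nsmul univ _ _ fun i _ => hj i (mem_univ i)

lemma sum_eq_sum_range_card_filter_lt {ι : Type*} (s : Finset ι) (f : ι → ℕ) {N : ℕ}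
    (hf : ∀ i ∈ s, f i ≤ N) : ∑ i ∈ s, f i = ∑ d ∈ range N, #{i ∈ s | d < f i} := by
  simp_rw [card_filter]
  rw [sum_comm]
  refine sum_congr rfl fun i hi => ?_
  have hrange : {d ∈ range N | d < f i} = range (f i) := by
    ext d
    simp only [mem_filter, mem_range]
    have := hf i hi
    omega
  rw [← card_filter, hrange, card_range]

section Spread

variable {d : ℕ} {T : Finset ℕ}

def rankShift (d : ℕ) (T : Finset ℕ) (t : ℕ) : ℕ := t + #{s ∈ T | s < t} * d

def spread (d : ℕ) (T : Finset ℕ) : Finset ℕ := T.image (rankShift d T)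

lemma rankShift_add_lt {t t' : ℕ} (ht : t ∈ T) (htt' : t < t') :
    rankShift d T t + d < rankShift d T t' := by
  have hrank : #{s ∈ T | s < t} < #{s ∈ T | s < t'} := by
    refine card_lt_card ((ssubset_iff_of_subset fun s hs => ?_).mpr ⟨t, ?_, ?_⟩)
    · simp only [mem_filter] at hs ⊢
      exact ⟨hs.1, hs.2.trans htt'⟩
    · exact mem_filter.mpr ⟨ht, htt'⟩
    · simp
  have : (#{s ∈ T | s < t} + 1) * d ≤ #{s ∈ T | s < t'} * d := Nat.mul_le_mul_right d hrank
  unfold rankShift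
  linarith

lemma strictMonoOn_rankShift (d : ℕ) (T : Finset ℕ) : StrictMonoOn (rankShift d T) T :=
  fun _ ht _ _ htt' => (Nat.le_add_right _ d).trans_lt (rankShift_add_lt ht htt')

lemma card_spread (d : ℕ) (T : Finset ℕ) : #(spread d T) = #T :=
  card_image_of_injOn (strictMonoOn_rankShift d T).injOn

lemma add_lt_of_mem_spread {x y : ℕ} (hx : x ∈ spread d T) (hy : y ∈ spread d T) (hxy : x < y) :
    x + d < y := by
  obtain ⟨t, ht, rfl⟩ := mem_image.mp hx
  obtain ⟨t', ht', rfl⟩ := mem_image.mp hy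
  exact rankShift_add_lt ht (((strictMonoOn_rankShift d T).lt_iff_lt ht ht').mp hxy)

lemma add_lt_of_mem_spread_of_subset_range {m x : ℕ} (hT : T ⊆ range m) (hx : x ∈ spread d T) :
    x + d < m + #T * d := by
  obtain ⟨t, ht, rfl⟩ := mem_image.mp hx
  have htm := mem_range.mp (hT ht)
  have hrank : #{s ∈ T | s < t} < #T := card_lt_card (filter_ssubset.mpr ⟨t, ht, lt_irrefl t⟩)
  have : (#{s ∈ T | s < t} + 1) * d ≤ #T * d := Nat.mul_le_mul_right d hrank
  unfold rankShift
  linarith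

lemma card_filter_spread_lt {t : ℕ} (ht : t ∈ T) :
    #{y ∈ spread d T | y < rankShift d T t} = #{s ∈ T | s < t} := by
  rw [spread, filter_image,
    card_image_of_injOn ((strictMonoOn_rankShift d T).injOn.mono (filter_subset _ _))]
  exact congrArg card (filter_congr fun s hs => (strictMonoOn_rankShift d T).lt_iff_lt hs ht)

lemma image_sub_rank_spread (d : ℕ) (T : Finset ℕ) :
    (spread d T).image (fun y => y - #{z ∈ spread d T | z < y} * d) = T := by
  conv_rhs => rw [← image_id (s := T)]
  refine (image_image ..).trans (image_congr fun t ht => ?_)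
  simp only [Function.comp_apply, card_filter_spread_lt ht, id]
  exact Nat.add_sub_cancel _ _

lemma spread_injective (d : ℕ) : Function.Injective (spread d) := fun T T' h => by
  rw [← image_sub_rank_spread d T, ← image_sub_rank_spread d T', h]

end Spread

lemma injOn_add_natCast [NeZero n] (a : Fin n) :
    Set.InjOn (fun q : ℕ => a + (q : Fin n)) ↑(range n) := fun q hq q' hq' h => by
  have := congrArg Fin.val (add_left_cancel h)
  rwa [Fin.val_cast_of_lt (mem_range.mp hq), Fin.val_cast_of_lt (mem_range.mp hq')] at this

/-- The condition `q + d < n` takes care of the gap that wraps around. -/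
lemma lt_minCircGap_image [NeZero n] {Q : Finset ℕ} {d : ℕ} (a : Fin n) (hQ : 1 < #Q)
    (hQn : ∀ q ∈ Q, q + d < n) (hsep : ∀ q ∈ Q, ∀ q' ∈ Q, q < q' → q + d < q') :
    d < minCircGap (Q.image fun q : ℕ => a + (q : Fin n)) := by
  have hQr : Q ⊆ range n := fun q hq => mem_range.mpr (by have := hQn q hq; omega)
  rw [← card_image_of_injOn ((injOn_add_natCast a).mono hQr)] at hQ
  obtain ⟨x, hx, y, hy, hxy, hgap⟩ := exists_minCircGap_eq hQ
  obtain ⟨q, hq, rfl⟩ := mem_image.mp hx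
  obtain ⟨q', hq', rfl⟩ := mem_image.mp hy
  have hqn := hQn q hq
  have hq'n := hQn q' hq'
  rw [add_sub_add_left_eq_sub] at hgap
  rcases lt_trichotomy q q' with h | rfl | h
  · rw [← hgap, val_natCast_sub_natCast h.le (by omega)]
    have := hsep q hq q' hq' h
    omega
  · exact absurd rfl hxy
  · have hval : ((q' : Fin n) - (q : Fin n)).val = n + q' - q := by
      refine Fin.coe_sub_iff_lt.mpr ?_ |>.trans ?_
      · rw [Fin.lt_def, Fin.val_cast_of_lt (by omega), Fin.val_cast_of_lt (by omega)]
        exact h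
      · rw [Fin.val_cast_of_lt (by omega), Fin.val_cast_of_lt (by omega)]
    omega

def spreadEdge [NeZero n] (d : ℕ) (a : Fin n) (T : Finset ℕ) : Finset (Fin n) :=
  (spread d (insert 0 (T.image Nat.succ))).image fun q : ℕ => a + (q : Fin n)

section SpreadEdge

variable {r d : ℕ} {T : Finset ℕ}

lemma card_insert_zero_image_succ (T : Finset ℕ) : #(insert 0 (T.image Nat.succ)) = #T + 1 := by
  rw [card_insert_of_notMem (by simp), card_image_of_injective _ Nat.succ_injective]

lemma add_lt_of_mem_spread_insert_zero (hr : 1 ≤ r) (hrd : (d + 1) * r ≤ n)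
    (hT : T ∈ powersetCard (r - 1) (range (n - 1 - r * d))) {q : ℕ}
    (hq : q ∈ spread d (insert 0 (T.image Nat.succ))) : q + d < n := by
  obtain ⟨hTm, hTc⟩ := mem_powersetCard.mp hT
  have hsub : insert 0 (T.image Nat.succ) ⊆ range (n - 1 - r * d + 1) := by
    intro t ht
    rcases mem_insert.mp ht with rfl | ht
    · simp
    · obtain ⟨s, hs, rfl⟩ := mem_image.mp ht
      simpa using mem_range.mp (hTm hs)
  have := add_lt_of_mem_spread_of_subset_range hsub hq
  rw [card_insert_zero_image_succ, hTc, Nat.sub_add_cancel hr] at this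
  have : r * d + r ≤ n := by linarith
  omega

lemma spreadEdge_mem [NeZero n] (hr : 2 ≤ r) (hrd : (d + 1) * r ≤ n) (a : Fin n)
    (hT : T ∈ powersetCard (r - 1) (range (n - 1 - r * d))) :
    spreadEdge d a T ∈
      {A ∈ {A ∈ powersetCard r (univ : Finset (Fin n)) | d < minCircGap A} | a ∈ A} := by
  have hQn : ∀ q ∈ spread d (insert 0 (T.image Nat.succ)), q + d < n := fun q hq =>
    add_lt_of_mem_spread_insert_zero (by omega) hrd hT hq
  have hQc : #(spread d (insert 0 (T.image Nat.succ))) = r := by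
    rw [card_spread, card_insert_zero_image_succ, (mem_powersetCard.mp hT).2]
    omega
  have hQr : spread d (insert 0 (T.image Nat.succ)) ⊆ range n := fun q hq =>
    mem_range.mpr (by have := hQn q hq; omega)
  simp only [mem_filter, mem_powersetCard]
  refine ⟨⟨⟨subset_univ _, ?_⟩, ?_⟩, ?_⟩
  · rw [spreadEdge, card_image_of_injOn ((injOn_add_natCast a).mono hQr), hQc]
  · exact lt_minCircGap_image a (by omega) hQn
      fun q hq q' hq' h => add_lt_of_mem_spread hq hq' h
  · refine mem_image.mpr ⟨0, mem_image.mpr ⟨0, mem_insert_self _ _, ?_⟩, by simp⟩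
    simp [rankShift]

lemma injOn_spreadEdge [NeZero n] (hr : 1 ≤ r) (hrd : (d + 1) * r ≤ n) (a : Fin n) :
    Set.InjOn (spreadEdge d a) ↑(powersetCard (r - 1) (range (n - 1 - r * d))) := by
  intro T hT T' hT' h
  have hQr : ∀ {T}, T ∈ powersetCard (r - 1) (range (n - 1 - r * d)) →
      spread d (insert 0 (T.image Nat.succ)) ⊆ range n := fun hT q hq =>
    mem_range.mpr (by have := add_lt_of_mem_spread_insert_zero hr hrd hT hq; omega)
  have hQ := (image_eq_image_iff_of_injOn (injOn_add_natCast a) (hQr hT) (hQr hT')).mp h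
  have := congrArg (·.erase 0) (spread_injective d hQ)
  simp only [erase_insert (show 0 ∉ T.image Nat.succ by simp),
    erase_insert (show 0 ∉ T'.image Nat.succ by simp)] at this
  exact image_injective Nat.succ_injective this

end SpreadEdge

/-- Every vertex lies in at least `C(n - 1 - rd, r - 1)` of the `r`-sets with all circular gaps
above `d`; double counting vertex–set incidences gives the bound. -/
lemma mul_choose_le_mul_card_filter_lt_minCircGap [NeZero n] {r d : ℕ} (hr : 2 ≤ r)
    (hrd : (d + 1) * r ≤ n) :
    n * (n - 1 - r * d).choose (r - 1) ≤
      r * #{A ∈ powersetCard r (univ : Finset (Fin n)) | d < minCircGap A} := by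
  have hfiber : ∀ a : Fin n, (n - 1 - r * d).choose (r - 1) ≤
      #{A ∈ {A ∈ powersetCard r (univ : Finset (Fin n)) | d < minCircGap A} | a ∈ A} := by
    intro a
    rw [← card_range (n - 1 - r * d), ← card_powersetCard]
    exact card_le_card_of_injOn _ (fun T hT => spreadEdge_mem hr hrd a hT)
      (injOn_spreadEdge (by omega) hrd a)
  calc n * (n - 1 - r * d).choose (r - 1)
      ≤ ∑ A ∈ {A ∈ powersetCard r (univ : Finset (Fin n)) | d < minCircGap A}, #A := by
        simpa using le_sum_card hfiber
    _ = r * #{A ∈ powersetCard r (univ : Finset (Fin n)) | d < minCircGap A} := by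
        rw [sum_const_nat fun A hA => (mem_powersetCard.mp (mem_filter.mp hA).1).2, mul_comm]

lemma mul_sum_choose_le_mul_sum_minCircGap [NeZero n] {r : ℕ} (hr : 2 ≤ r) :
    n * ∑ d ∈ range (n / r), (n - 1 - r * d).choose (r - 1) ≤
      r * ∑ A ∈ powersetCard r (univ : Finset (Fin n)), minCircGap A := by
  have hgap : ∀ A ∈ powersetCard r (univ : Finset (Fin n)), minCircGap A ≤ n / r := fun A hA => by
    rw [Nat.le_div_iff_mul_le (by omega), mul_comm, ← (mem_powersetCard.mp hA).2]
    exact card_mul_minCircGap_le A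
  rw [sum_eq_sum_range_card_filter_lt _ _ hgap, mul_sum, mul_sum]
  exact sum_le_sum fun d hd => mul_choose_le_mul_card_filter_lt_minCircGap hr
    ((Nat.le_div_iff_mul_le (by omega)).mp (mem_range.mp hd))

end CircularGap

lemma sum_range_choose_eq_choose_succ (n k : ℕ) :
    ∑ m ∈ range n, m.choose k = n.choose (k + 1) := by
  induction n with
  | zero => simp
  | succ n ih => rw [sum_range_succ, ih, Nat.choose_succ_succ', add_comm]

lemma sum_range_mul_le_of_antitone {f : ℕ → ℕ} (hf : Antitone f) (r q : ℕ) :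
    ∑ k ∈ range (r * q), f k ≤ r * ∑ d ∈ range q, f (r * d) := by
  induction q with
  | zero => simp
  | succ q ih =>
    rw [Nat.mul_succ, sum_range_add, sum_range_succ, mul_add]
    gcongr
    calc ∑ i ∈ range r, f (r * q + i) ≤ ∑ _i ∈ range r, f (r * q) :=
          sum_le_sum fun i _ => hf (Nat.le_add_right _ _)
      _ = r * f (r * q) := by rw [sum_const, card_range, smul_eq_mul]

/-- Hockey stick, then blocks of `r` consecutive terms each bounded by the first. -/
lemma choose_le_mul_sum_range_choose {n r : ℕ} (hr : 1 ≤ r) :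
    n.choose r ≤ r * ∑ d ∈ range (n / r), (n - 1 - r * d).choose (r - 1) := by
  set f : ℕ → ℕ := fun k => (n - 1 - k).choose (r - 1)
  have htail : ∀ i ∈ range (n % r), f (r * (n / r) + i) = 0 := fun i hi =>
    Nat.choose_eq_zero_of_lt (by
      have := mem_range.mp hi
      have := Nat.div_add_mod n r
      have := Nat.mod_lt n (show 0 < r by omega)
      omega)
  calc n.choose r = ∑ k ∈ range n, f k := by
        rw [sum_range_reflect (fun m => m.choose (r - 1)), sum_range_choose_eq_choose_succ,
          Nat.sub_add_cancel hr]
    _ = ∑ k ∈ range (r * (n / r)), f k := by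
        rw [← add_zero (∑ k ∈ range (r * (n / r)), f k), ← sum_eq_zero htail, ← sum_range_add,
          Nat.div_add_mod]
    _ ≤ r * ∑ d ∈ range (n / r), f (r * d) :=
        sum_range_mul_le_of_antitone (fun k l hkl => Nat.choose_le_choose _ (by omega)) r (n / r)


/-- `ex(n, H_3^r) ≥ (1/n)·C(n,r) + (1/r)·∑_{d=0}^{⌊n/r⌋−1} C(n−1−rd, r−1)`,
and consequently `ex(n, H_3^r) ≥ (1/r²)·C(n,r)`. -/
theorem statement13 (n r : ℕ) (hr : 2 ≤ r) (hrn : r ≤ n) :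
    ∃ G : Finset (Finset (Fin n)), (∀ e ∈ G, e.card = r) ∧ DaisyFree r 3 G ∧
      (1 / (n : ℝ)) * (n.choose r : ℝ) +
        (1 / (r : ℝ)) * ∑ d ∈ Finset.range (n / r), ((n - 1 - r * d).choose (r - 1) : ℝ)
        ≤ (G.card : ℝ) ∧
      (1 / (r : ℝ) ^ 2) * (n.choose r : ℝ) ≤ (G.card : ℝ) := by
  have : NeZero n := ⟨by omega⟩
  obtain ⟨j, hj⟩ := exists_choose_add_sum_minCircGap_le (n := n) r
  refine ⟨gapGraph r j, fun A hA => card_of_mem_gapGraph hA, daisyFree_gapGraph r j, ?_⟩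
  have hgaps := mul_sum_choose_le_mul_sum_minCircGap (n := n) hr
  have hhockey := choose_le_mul_sum_range_choose (n := n) (r := r) (by omega)
  set C := n.choose r
  set S := ∑ d ∈ range (n / r), (n - 1 - r * d).choose (r - 1)
  set g := #(gapGraph r j)
  have hfirst : C * r + n * S ≤ g * (n * r) := by nlinarith
  have hsecond : C ≤ g * r ^ 2 :=
    Nat.le_of_mul_le_mul_left (by nlinarith : n * C ≤ n * (g * r ^ 2)) (by omega)
  have hnR : (0 : ℝ) < n := Nat.cast_pos.mpr (by omega)
  have hrR : (0 : ℝ) < r := Nat.cast_pos.mpr (by omega)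
  rw [← Nat.cast_sum]
  constructor
  · rw [one_div_mul_eq_div, one_div_mul_eq_div, div_add_div _ _ hnR.ne' hrR.ne',
      div_le_iff₀ (by positivity)]
    exact_mod_cast hfirst
  · rw [one_div_mul_eq_div, div_le_iff₀ (by positivity)]
    exact_mod_cast hsecond
end

section
/- Fix k with 3 ≤ k ≤ r+1 and j ∈ Z_n. Let G(n,r,k−1,j) be the r-uniform hypergraph on vertex set Z_n whose edges are the r-subsets A with (j + ∑_{x∈A} x) mod n ∈ {0, 1, ..., d_{k−1}(A)}, where d_{k−1}(A) is the minimum, over (k−1)-element subsets B of A, of the length of the shortest directed path in the oriented cycle C_n passing through all elements of B. Then G(n,r,k−1,j) contains no copy of H_k^r, the r-uniform hypergraph with r+1 vertices and k edges. -/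
/-- Length of the directed path in the oriented cycle `C_n` starting at `b`
and covering all of `B`. -/
def pathLen {n : ℕ} (B : Finset (ZMod n)) (b : ZMod n) : ℕ :=
  B.sup fun a => (a - b).val

/-- `d(B)`: the length of the shortest directed path in `C_n` passing through all
elements of `B`. -/
noncomputable def cycDiam {n : ℕ} (B : Finset (ZMod n)) : ℕ :=
  sInf ((fun b => pathLen B b) '' (B : Set (ZMod n)))

/-- `d_t(A) = min {d(B) : B ⊆ A, |B| = t}`. -/
noncomputable def dmin {n : ℕ} (A : Finset (ZMod n)) (t : ℕ) : ℕ :=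
  sInf (cycDiam '' {B : Finset (ZMod n) | B ⊆ A ∧ B.card = t})

private lemma val_inj_aux {n : ℕ} [NeZero n] {a b : ZMod n} (h : a.val = b.val) :
    a = b := by
  have := congrArg (fun m : ℕ => (m : ZMod n)) h
  simpa [ZMod.natCast_val, ZMod.cast_id] using this

/-- the `r`-graph `G(n,r,k−1,j)` on `ℤ/n`, whose edges are the
`r`-subsets `A` with `(j + ∑_{x∈A} x) mod n ∈ {0,…,d_{k−1}(A)}`, contains no copy
of `H_k^r`. -/
theorem statement14 (n r k : ℕ) [NeZero n] (hk : 3 ≤ k) (hkr : k ≤ r + 1)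
    (j : ZMod n) :
    DaisyFree r k ((Finset.univ.powersetCard r).filter
      (fun A : Finset (ZMod n) => (j + ∑ x ∈ A, x).val ≤ dmin A (k - 1))) := by
  rintro ⟨B, hB, Z, hZB, hZk, hE⟩
  set s : ZMod n := j + ∑ x ∈ B, x with hs
  -- edge condition, rewritten
  have hf : ∀ z ∈ Z, (s - z).val ≤ dmin (B.erase z) (k - 1) := by
    intro z hz
    have hmem := hE z hz
    rw [Finset.mem_filter] at hmem
    have hsum : ∑ x ∈ B.erase z, x = (∑ x ∈ B, x) - z :=
      Finset.sum_erase_eq_sub (hZB hz)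
    have h2 := hmem.2
    rw [hsum] at h2
    have : j + ((∑ x ∈ B, x) - z) = s - z := by rw [hs]; ring
    rwa [this] at h2
  -- pick maximizer
  have hZne : Z.Nonempty := Finset.card_pos.mp (by omega)
  obtain ⟨zk, hzk, hmax⟩ := Z.exists_max_image (fun z => (s - z).val) hZne
  set Z' : Finset (ZMod n) := Z.erase zk with hZ'
  have hZ'card : Z'.card = k - 1 := by
    rw [hZ', Finset.card_erase_of_mem hzk, hZk]
  have hZ'ne : Z'.Nonempty := Finset.card_pos.mp (by omega)
  obtain ⟨b, hb, hbmax⟩ := Z'.exists_max_image (fun z => (s - z).val) hZ'ne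
  -- strict inequality for elements of Z'
  have hstrict : ∀ a ∈ Z', (s - a).val < (s - zk).val := by
    intro a ha
    have hle : (s - a).val ≤ (s - zk).val := hmax a (Finset.mem_of_mem_erase ha)
    rcases lt_or_eq_of_le hle with h | h
    · exact h
    · exfalso
      have : s - a = s - zk := val_inj_aux h
      have : a = zk := sub_right_injective this
      exact (Finset.ne_of_mem_erase ha) this
  -- path length bound
  have hpath : pathLen Z' b ≤ (s - b).val := by
    apply Finset.sup_le
    intro a ha
    have hle : (s - a).val ≤ (s - b).val := hbmax a ha
    have hcast : a - b = (((s - b).val - (s - a).val : ℕ) : ZMod n) := by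
      push_cast [Nat.cast_sub hle, ZMod.natCast_val, ZMod.cast_id]
      ring
    rw [hcast, ZMod.val_natCast]
    exact le_trans (Nat.mod_le _ _) (le_trans (Nat.sub_le _ _) le_rfl)
  have hcyc : cycDiam Z' ≤ pathLen Z' b :=
    Nat.sInf_le ⟨b, by exact_mod_cast hb, rfl⟩
  have hsub : Z' ⊆ B.erase zk := by
    intro z hz
    exact Finset.mem_erase.mpr ⟨Finset.ne_of_mem_erase hz,
      hZB (Finset.mem_of_mem_erase hz)⟩
  have hdmin : dmin (B.erase zk) (k - 1) ≤ cycDiam Z' :=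
    Nat.sInf_le ⟨Z', ⟨hsub, hZ'card⟩, rfl⟩
  have h1 : (s - zk).val ≤ dmin (B.erase zk) (k - 1) := hf zk hzk
  have h2 : (s - b).val < (s - zk).val := hstrict b hb
  omega
end

section
/- Let G_{r,k−1} be the infinite r-uniform hypergraph on the unit circle C = {z ∈ ℂ : |z| = 1} whose edges are the r-element subsets A ⊂ C such that the product of the elements of A equals e^{iφ} for some φ ∈ [0, Δ_{k−1}(A)], where Δ_{k−1}(A) is the length of the shortest arc of C containing at least k−1 elements of A. Then for 3 ≤ k ≤ r+1, G_{r,k−1} contains no copy of H_k^r (the r-uniform hypergraph with r+1 vertices and k edges). -/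
open scoped Classical

/-- The number of elements of `A` lying on the closed arc of the unit circle
starting at angle `θ` and of length `L`. -/
noncomputable def arcCount (A : Finset Circle) (θ L : ℝ) : ℕ :=
  (A.filter fun z => ∃ φ : ℝ, θ ≤ φ ∧ φ ≤ θ + L ∧ z = Circle.exp φ).card

/-- `Δ_t(A)`: the length of the shortest arc of the unit circle containing at least
`t` elements of `A`. -/
noncomputable def Delta (t : ℕ) (A : Finset Circle) : ℝ :=
  sInf {L : ℝ | 0 ≤ L ∧ ∃ θ : ℝ, t ≤ arcCount A θ L}

/-- `A` is an edge of the infinite `r`-graph `G_{r,k−1}`: `A` has `r` elements and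
`Π(A) = e^{iφ}` for some `φ ∈ [0, Δ_{k−1}(A)]`. -/
noncomputable def IsEdge (r k : ℕ) (A : Finset Circle) : Prop :=
  A.card = r ∧ ∃ φ : ℝ, 0 ≤ φ ∧ φ ≤ Delta (k - 1) A ∧ (∏ z ∈ A, z) = Circle.exp φ

/-- for `3 ≤ k ≤ r + 1`, the graph `G_{r,k−1}` contains no copy of
`H_k^r`: there is no set `B` of `r+1` points of the circle with `k` distinct points
`z ∈ B` such that every `B \ {z}` is an edge. -/
theorem statement15 (r k : ℕ) (hk : 3 ≤ k) (hkr : k ≤ r + 1) :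
    ¬ ∃ B : Finset Circle, B.card = r + 1 ∧
      ∃ Z ⊆ B, Z.card = k ∧ ∀ z ∈ Z, IsEdge r k (B.erase z) := by
  rintro ⟨B, hB, Z, hZB, hZcard, hedge⟩
  -- choose angles
  have hφ : ∀ z ∈ Z, ∃ φ : ℝ, 0 ≤ φ ∧ φ ≤ Delta (k - 1) (B.erase z) ∧
      (∏ w ∈ B.erase z, w) = Circle.exp φ := fun z hz => (hedge z hz).2
  choose! f hf0 hfD hfprod using hφ
  -- write the total product as exp ψ
  set P : Circle := ∏ w ∈ B, w with hP
  set ψ : ℝ := Complex.arg (P : ℂ) with hψdef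
  have hψ : Circle.exp ψ = P := Circle.exp_arg P
  -- each z ∈ Z equals exp (ψ - f z)
  have hz_eq : ∀ z ∈ Z, z = Circle.exp (ψ - f z) := by
    intro z hz
    have hzB : z ∈ B := hZB hz
    have hmul : z * ∏ w ∈ B.erase z, w = P := Finset.mul_prod_erase B id hzB
    have : z * Circle.exp (f z) = Circle.exp ψ := by
      rw [← hfprod z hz, hmul, hψ]
    have hz' : z = Circle.exp ψ * (Circle.exp (f z))⁻¹ := by
      rw [← this]; group
    rw [sub_eq_add_neg, Circle.exp_add, Circle.exp_neg]
    exact hz'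
  -- f is injective on Z
  have hfinj : ∀ z ∈ Z, ∀ w ∈ Z, f z = f w → z = w := by
    intro z hz w hw h
    rw [hz_eq z hz, hz_eq w hw, h]
  -- pick z₁ maximizing f over Z
  have hZne : Z.Nonempty := Finset.card_pos.mp (by omega)
  obtain ⟨z₁, hz₁Z, hz₁max⟩ := Finset.exists_max_image Z f hZne
  -- pick z₂ maximizing f over Z.erase z₁
  have hZ'ne : (Z.erase z₁).Nonempty := by
    apply Finset.card_pos.mp
    rw [Finset.card_erase_of_mem hz₁Z]
    omega
  obtain ⟨z₂, hz₂Z', hz₂max⟩ := Finset.exists_max_image (Z.erase z₁) f hZ'ne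
  have hz₂Z : z₂ ∈ Z := Finset.mem_of_mem_erase hz₂Z'
  have hz₂ne : z₂ ≠ z₁ := Finset.ne_of_mem_erase hz₂Z'
  -- f z₂ < f z₁
  have hlt : f z₂ < f z₁ := by
    rcases lt_or_eq_of_le (hz₁max z₂ hz₂Z) with h | h
    · exact h
    · exact absurd (hfinj z₂ hz₂Z z₁ hz₁Z h) hz₂ne
  -- Delta (k-1) (B.erase z₁) ≤ f z₂
  have hDelta : Delta (k - 1) (B.erase z₁) ≤ f z₂ := by
    apply csInf_le ⟨0, fun L hL => hL.1⟩
    refine ⟨hf0 z₂ hz₂Z, ψ - f z₂, ?_⟩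
    have hsub : Z.erase z₁ ⊆ (B.erase z₁).filter
        fun z => ∃ φ : ℝ, ψ - f z₂ ≤ φ ∧ φ ≤ ψ - f z₂ + f z₂ ∧ z = Circle.exp φ := by
      intro z hz
      have hzZ : z ∈ Z := Finset.mem_of_mem_erase hz
      refine Finset.mem_filter.mpr ⟨Finset.mem_erase.mpr ⟨Finset.ne_of_mem_erase hz, hZB hzZ⟩,
        ψ - f z, ?_, ?_, hz_eq z hzZ⟩
      · have := hz₂max z hz; linarith
      · have := hf0 z hzZ; linarith
    calc (k : ℕ) - 1 = (Z.erase z₁).card := by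
          rw [Finset.card_erase_of_mem hz₁Z, hZcard]
      _ ≤ arcCount (B.erase z₁) (ψ - f z₂) (f z₂) := Finset.card_le_card hsub
  have := hfD z₁ hz₁Z
  linarith
end

section
/- Fix 3 ≤ k ≤ r+1 and let t = k−1. Then ex(t·n, H_k^r) ≥ t^r·ex(n, H_k^r) + (1/n)·C(tn, r) − (1/n)·t^r·C(n, r) − (1/2)·t^{r−1}·(t−1)·C(n−1, r−2). -/
/-- The Turán number `ex(n, H_k^r)`. -/
noncomputable def exDaisy (n r k : ℕ) : ℕ :=
  sSup {m | ∃ G : Finset (Finset (Fin n)),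
    (∀ e ∈ G, e.card = r) ∧ DaisyFree r k G ∧ G.card = m}

open Finset

section Daisy

variable {r k : ℕ} {V W : Type*} [DecidableEq V] [DecidableEq W]

lemma DaisyFree.map_equiv (e : V ≃ W) {G : Finset (Finset V)} (h : DaisyFree r k G) :
    DaisyFree r k (G.map e.finsetCongr.toEmbedding) := by
  rintro ⟨B, hB, Z, hZB, hZ, hmem⟩
  refine h ⟨B.map e.symm.toEmbedding, by simpa, Z.map e.symm.toEmbedding, map_subset_map.2 hZB,
    by simpa, ?_⟩
  intro y hy
  obtain ⟨z, hz, rfl⟩ := mem_map.1 hy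
  simpa [map_erase, mem_map_equiv] using hmem z hz

lemma bddAbove_daisyFree_card (N : ℕ) : BddAbove {m | ∃ G : Finset (Finset (Fin N)),
    (∀ e ∈ G, e.card = r) ∧ DaisyFree r k G ∧ G.card = m} := by
  refine ⟨N.choose r, ?_⟩
  rintro m ⟨G, hG, -, rfl⟩
  calc #G ≤ #((univ : Finset (Fin N)).powersetCard r) :=
        card_le_card fun A hA => mem_powersetCard_univ.2 (hG A hA)
    _ = N.choose r := by simp

variable [Fintype V]

lemma card_le_exDaisy {G : Finset (Finset V)} (hG : ∀ A ∈ G, #A = r) (hfree : DaisyFree r k G) :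
    #G ≤ exDaisy (Fintype.card V) r k := by
  refine le_csSup (bddAbove_daisyFree_card _)
    ⟨G.map (Fintype.equivFin V).finsetCongr.toEmbedding, fun A hA => ?_, hfree.map_equiv _,
      card_map _⟩
  obtain ⟨B, hB, rfl⟩ := mem_map.1 hA
  simpa using hG B hB

lemma exists_daisyFree_card_eq_exDaisy (hk : 0 < k) : ∃ G : Finset (Finset V),
      (∀ A ∈ G, #A = r) ∧ DaisyFree r k G ∧ #G = exDaisy (Fintype.card V) r k := by
  have hempty : DaisyFree r k (∅ : Finset (Finset (Fin (Fintype.card V)))) := by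
    rintro ⟨_, _, Z, _, hZ, hmem⟩
    obtain ⟨z, hz⟩ := card_pos.1 (hZ ▸ hk)
    simpa using hmem z hz
  obtain ⟨G, hG, hfree, hcard⟩ :=
    Nat.sSup_mem (by exact ⟨0, ∅, by simp, hempty, rfl⟩) (bddAbove_daisyFree_card _)
  refine ⟨G.map (Fintype.equivFin V).symm.finsetCongr.toEmbedding, fun A hA => ?_,
    hfree.map_equiv _, by rw [card_map, hcard]; rfl⟩
  obtain ⟨B, hB, rfl⟩ := mem_map.1 hA
  simpa using hG B hB

end Daisy

section Counting

variable {α β : Type*} [Fintype α] [DecidableEq α] [Fintype β] [DecidableEq β]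

lemma card_filter_image_snd_eq (E : Finset β) :
    #{A ∈ (univ : Finset (α × β)).powersetCard #E | A.image Prod.snd = E} =
      Fintype.card α ^ #E := by
  have hfun : Fintype.card α ^ #E = #(univ : Finset (E → α)) := by simp
  rw [hfun, eq_comm]
  refine card_bij (fun f _ => univ.image fun x : E => (f x, (x : β))) ?_ ?_ ?_
  · intro f _
    simp only [mem_filter, mem_powersetCard_univ]
    constructor
    · rw [card_image_of_injective _ fun x y h => Subtype.ext (congrArg Prod.snd h)]
      simp
    · ext y; simp
  · intro f _ g _ hfg
    funext x
    have hx : (f x, (x : β)) ∈ univ.image fun y : E => (g y, (y : β)) :=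
      hfg ▸ mem_image_of_mem _ (mem_univ x)
    obtain ⟨y, -, hy⟩ := mem_image.1 hx
    obtain rfl : y = x := Subtype.ext (congrArg Prod.snd hy)
    exact (congrArg Prod.fst hy).symm
  · intro A hA
    simp only [mem_filter, mem_powersetCard_univ] at hA
    obtain ⟨hcard, himage⟩ := hA
    have hinj : Set.InjOn Prod.snd (A : Set (α × β)) := card_image_iff.1 (himage ▸ hcard.symm)
    have hlift : ∀ x : E, ∃ a ∈ A, a.2 = x := fun x => mem_image.1 (himage ▸ x.2)
    choose f hfA hf using hlift
    refine ⟨fun x => (f x).1, mem_univ _, eq_of_subset_of_card_le ?_ ?_⟩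
    · intro a ha
      obtain ⟨x, -, rfl⟩ := mem_image.1 ha
      simpa [← hf x] using hfA x
    · rw [card_image_of_injective _ fun x y h => Subtype.ext (congrArg Prod.snd h), hcard]
      simp

lemma card_filter_image_snd_mem {m : ℕ} {𝒜 : Finset (Finset β)} (h𝒜 : ∀ E ∈ 𝒜, #E = m) :
    #{A ∈ (univ : Finset (α × β)).powersetCard m | A.image Prod.snd ∈ 𝒜} =
      Fintype.card α ^ m * #𝒜 := by
  rw [card_eq_sum_card_fiberwise (f := image Prod.snd) (t := 𝒜) ?_,
    mul_comm, ← smul_eq_mul, ← sum_const]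
  · refine sum_congr rfl fun E hE => ?_
    rw [← h𝒜 E hE, ← card_filter_image_snd_eq E, filter_filter]
    congr 1
    ext A
    simp only [mem_filter, mem_powersetCard_univ]
    constructor
    · rintro ⟨hA, -, rfl⟩
      exact ⟨h𝒜 _ hE ▸ hA, rfl⟩
    · rintro ⟨hA, rfl⟩
      exact ⟨h𝒜 _ hE ▸ hA, hE, rfl⟩
  · exact fun A hA => (mem_filter.1 hA).2

end Counting

section NearInjective

variable {α β : Type*} [DecidableEq α] [DecidableEq β]

lemma exists_card_filter_snd_eq_two {A : Finset (α × β)} (h : #(A.image Prod.snd) + 1 = #A) :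
    ∃ x, #{a ∈ A | a.2 = x} = 2 ∧ #{a ∈ A | a.2 ≠ x} + 2 = #A ∧
      #({a ∈ A | a.2 ≠ x}.image Prod.snd) + 2 = #A := by
  obtain ⟨u, hu, v, hv, huv, hsnd⟩ := exists_ne_map_eq_of_card_lt_of_maps_to
    (t := A.image Prod.snd) (by omega) fun a ha => mem_image_of_mem Prod.snd ha
  refine ⟨u.2, ?_⟩
  have hsplit : #{a ∈ A | a.2 = u.2} + #{a ∈ A | a.2 ≠ u.2} = #A :=
    card_filter_add_card_filter_not _
  have hfiber : 2 ≤ #{a ∈ A | a.2 = u.2} := by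
    rw [← card_pair huv]
    refine card_le_card fun a ha => ?_
    rcases mem_insert.1 ha with rfl | ha
    · exact mem_filter.2 ⟨hu, rfl⟩
    · exact mem_filter.2 ⟨(mem_singleton.1 ha) ▸ hv, by rw [mem_singleton.1 ha, hsnd]⟩
  have himage : A.image Prod.snd = insert u.2 ({a ∈ A | a.2 ≠ u.2}.image Prod.snd) := by
    ext y
    simp only [mem_image, mem_insert, mem_filter]
    constructor
    · rintro ⟨a, ha, rfl⟩
      by_cases hau : a.2 = u.2
      · exact Or.inl hau
      · exact Or.inr ⟨a, ⟨ha, hau⟩, rfl⟩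
    · rintro (rfl | ⟨a, ⟨ha, -⟩, rfl⟩)
      exacts [⟨u, hu, rfl⟩, ⟨a, ha, rfl⟩]
  have hnotMem : u.2 ∉ {a ∈ A | a.2 ≠ u.2}.image Prod.snd := by simp
  have hrest := card_image_le (s := {a ∈ A | a.2 ≠ u.2}) (f := Prod.snd)
  rw [himage, card_insert_of_notMem hnotMem] at h
  omega

lemma filter_snd_eq_union_filter_snd_ne (A : Finset (α × β)) (x : β) :
    {a ∈ A | a.2 = x}.image Prod.fst ×ˢ {x} ∪ {a ∈ A | a.2 ≠ x} = A := by
  ext ⟨l, y⟩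
  by_cases hy : y = x
  · subst hy; simp
  · simp [hy, Ne.symm hy]

variable [Fintype α] [Fintype β]

/-- An `r`-set whose projection has size `r - 1` is a pair inside one fibre together with
`r - 2` points in distinct other fibres. -/
lemma card_filter_card_image_snd_add_one_le (r : ℕ) :
    #{A ∈ (univ : Finset (α × β)).powersetCard r | #(A.image Prod.snd) + 1 = r} ≤
      Fintype.card β * ((Fintype.card α).choose 2 * Fintype.card α ^ (r - 2) *
        (Fintype.card β - 1).choose (r - 2)) := by
  let S : Finset (Σ _ : β, Finset α × Finset (α × β)) := univ.sigma fun x =>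
    (univ : Finset α).powersetCard 2 ×ˢ
      {C ∈ (univ : Finset (α × β)).powersetCard (r - 2) |
        C.image Prod.snd ∈ (univ.erase x).powersetCard (r - 2)}
  have hS : #S = Fintype.card β * ((Fintype.card α).choose 2 * Fintype.card α ^ (r - 2) *
      (Fintype.card β - 1).choose (r - 2)) := by
    rw [card_sigma, sum_const_nat fun x _ => ?_, card_univ]
    rw [card_product, card_filter_image_snd_mem fun E hE => (mem_powersetCard.1 hE).2,
      card_powersetCard, card_powersetCard, card_erase_of_mem (mem_univ x), card_univ,
      card_univ, mul_assoc]
  rw [← hS]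
  refine card_le_card_of_surjOn (fun p => p.2.1 ×ˢ {p.1} ∪ p.2.2) fun A hA => ?_
  simp only [coe_filter, mem_powersetCard_univ, Set.mem_ofPred_eq] at hA
  obtain ⟨hAr, hAimage⟩ := hA
  obtain ⟨x, hfiber, hrest, hrestImage⟩ := exists_card_filter_snd_eq_two (hAr ▸ hAimage)
  have hfst : Set.InjOn Prod.fst (({a ∈ A | a.2 = x} : Finset (α × β)) : Set (α × β)) :=
    fun _ ha _ hb hab => Prod.ext hab ((mem_filter.1 ha).2.trans (mem_filter.1 hb).2.symm)
  refine ⟨⟨x, {a ∈ A | a.2 = x}.image Prod.fst, {a ∈ A | a.2 ≠ x}⟩, ?_, ?_⟩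
  · rw [mem_coe, mem_sigma, mem_product]
    refine ⟨mem_univ x, ?_, ?_⟩ <;> dsimp only
    · rw [mem_powersetCard_univ, card_image_of_injOn hfst, hfiber]
    · refine mem_filter.2
        ⟨mem_powersetCard_univ.2 (by omega), mem_powersetCard.2 ⟨?_, by omega⟩⟩
      intro y hy
      obtain ⟨a, ha, rfl⟩ := mem_image.1 hy
      exact mem_erase.2 ⟨(mem_filter.1 ha).2, mem_univ _⟩
  · exact filter_snd_eq_union_filter_snd_ne A x

variable (α β) in
def collapsedSets (r : ℕ) : Finset (Finset (α × β)) :=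
  {A ∈ (univ : Finset (α × β)).powersetCard r | #(A.image Prod.snd) + 2 ≤ r}

lemma choose_card_mul_le (r : ℕ) :
    (Fintype.card α * Fintype.card β).choose r ≤ #(collapsedSets α β r) +
      Fintype.card α ^ r * (Fintype.card β).choose r +
      Fintype.card β * ((Fintype.card α).choose 2 * Fintype.card α ^ (r - 2) *
        (Fintype.card β - 1).choose (r - 2)) := by
  set P := (univ : Finset (α × β)).powersetCard r
  have hfull : #{A ∈ P | A.image Prod.snd ∈ (univ : Finset β).powersetCard r} =
      Fintype.card α ^ r * (Fintype.card β).choose r := by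
    rw [card_filter_image_snd_mem fun E hE => (mem_powersetCard.1 hE).2, card_powersetCard,
      card_univ]
  have hcover : P ⊆ collapsedSets α β r ∪
      {A ∈ P | A.image Prod.snd ∈ (univ : Finset β).powersetCard r} ∪
      {A ∈ P | #(A.image Prod.snd) + 1 = r} := by
    intro A hA
    have hAr := mem_powersetCard_univ.1 hA
    have := hAr ▸ card_image_le (s := A) (f := Prod.snd)
    simp only [collapsedSets, mem_union, mem_filter, hA, true_and, mem_powersetCard_univ]
    omega
  calc (Fintype.card α * Fintype.card β).choose r = #P := by simp [P]
    _ ≤ #(collapsedSets α β r) +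
        #{A ∈ P | A.image Prod.snd ∈ (univ : Finset β).powersetCard r} +
        #{A ∈ P | #(A.image Prod.snd) + 1 = r} :=
      (card_le_card hcover).trans
        ((card_union_le _ _).trans (Nat.add_le_add_right (card_union_le _ _) _))
    _ ≤ _ := by rw [hfull]; gcongr; exact card_filter_card_image_snd_add_one_le r

end NearInjective

section Blowup

variable {α β γ δ : Type*} [DecidableEq γ] [DecidableEq δ]

lemma image_erase_of_injOn {f : γ → δ} {s : Finset γ} (hf : Set.InjOn f s) {a : γ} (ha : a ∈ s) :
    (s.erase a).image f = (s.image f).erase (f a) := by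
  ext y
  simp only [mem_image, mem_erase]
  constructor
  · rintro ⟨b, ⟨hba, hb⟩, rfl⟩
    exact ⟨fun h => hba (hf hb ha h), b, hb, rfl⟩
  · rintro ⟨hy, b, hb, rfl⟩
    exact ⟨b, ⟨fun h => hy (h ▸ rfl), hb⟩, rfl⟩

lemma card_image_le_card_image_erase_add_one (f : γ → δ) {s : Finset γ} {a : γ} (ha : a ∈ s) :
    #(s.image f) ≤ #((s.erase a).image f) + 1 := by
  conv_lhs => rw [← insert_erase ha, image_insert]
  exact card_insert_le _ _

variable [Fintype α] [DecidableEq β] [AddCommGroup β]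

variable [DecidableEq α] in
lemma card_le_of_forall_sum_erase_eq {B Z : Finset (α × β)} (hZB : Z ⊆ B) {j : β}
    (h : ∀ z ∈ Z, ∑ a ∈ B.erase z, a.2 = j) : #Z ≤ Fintype.card α := by
  have hsnd : ∀ z ∈ Z, z.2 = ∑ a ∈ B, a.2 - j := fun z hz => by
    rw [← h z hz, sum_erase_eq_sub (hZB hz), sub_sub_cancel]
  calc #Z ≤ #(univ : Finset α) :=
        card_le_card_of_injOn Prod.fst (fun _ _ => mem_coe.2 (mem_univ _))
          fun a ha b hb hab => Prod.ext hab ((hsnd a ha).trans (hsnd b hb).symm)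
    _ = Fintype.card α := card_univ

variable [Fintype β]

variable (α) in
/-- The family `G_j`, over an arbitrary finite abelian group `β` in place of `ℤ_n`. -/
def blowup (G : Finset (Finset β)) (r : ℕ) (j : β) : Finset (Finset (α × β)) :=
  {A ∈ (univ : Finset (α × β)).powersetCard r |
    A.image Prod.snd ∈ G ∨ (#(A.image Prod.snd) + 2 ≤ r ∧ ∑ a ∈ A, a.2 = j)}

variable {G : Finset (Finset β)} {r k : ℕ}

lemma card_of_mem_blowup {A : Finset (α × β)} {j : β} (hA : A ∈ blowup α G r j) : #A = r :=
  mem_powersetCard_univ.1 (mem_filter.1 hA).1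

variable [DecidableEq α]

lemma daisyFree_blowup (hG : ∀ E ∈ G, #E = r) (hfree : DaisyFree r k G) (hk : 3 ≤ k)
    (hα : Fintype.card α < k) (j : β) : DaisyFree r k (blowup α G r j) := by
  rintro ⟨B, hB, Z, hZB, hZ, hmem⟩
  have hmem' : ∀ z ∈ Z, (B.erase z).image Prod.snd ∈ G ∨
      (#((B.erase z).image Prod.snd) + 2 ≤ r ∧ ∑ a ∈ B.erase z, a.2 = j) :=
    fun z hz => (mem_filter.1 (hmem z hz)).2
  have hcardErase : ∀ z ∈ Z, #(B.erase z) = r := fun z hz => by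
    rw [card_erase_of_mem (hZB hz), hB, Nat.add_sub_cancel]
  have hP : #(B.image Prod.snd) ≤ r + 1 := hB ▸ card_image_le
  obtain hinj | hcoll | hlow : #(B.image Prod.snd) = r + 1 ∨ #(B.image Prod.snd) = r ∨
      #(B.image Prod.snd) + 1 ≤ r := by omega
  · have hinj' : Set.InjOn Prod.snd (B : Set (α × β)) := card_image_iff.1 (hinj.trans hB.symm)
    refine hfree ⟨B.image Prod.snd, hinj, Z.image Prod.snd, image_subset_image hZB,
      by rw [card_image_of_injOn (hinj'.mono (coe_subset.2 hZB)), hZ], ?_⟩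
    intro y hy
    obtain ⟨z, hz, rfl⟩ := mem_image.1 hy
    rw [← image_erase_of_injOn hinj' (hZB hz)]
    refine (hmem' z hz).resolve_right fun h => ?_
    rw [card_image_of_injOn (hinj'.mono (coe_subset.2 (erase_subset z B))),
      hcardErase z hz] at h
    omega
  · obtain ⟨u, hu, v, hv, huv, hsnd⟩ := exists_ne_map_eq_of_card_lt_of_maps_to
      (t := B.image Prod.snd) (by omega) fun a ha => mem_image_of_mem Prod.snd ha
    obtain ⟨z, hz, hzuv⟩ := exists_mem_notMem_of_card_lt_card (s := {u, v}) (t := Z)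
      (card_le_two.trans_lt (by omega))
    have hlt : #((B.erase z).image Prod.snd) < r := hcardErase z hz ▸ card_image_le.lt_of_ne
      fun h => huv (card_image_iff.1 h (mem_erase.2 ⟨fun h => hzuv (by simp [h]), hu⟩)
        (mem_erase.2 ⟨fun h => hzuv (by simp [h]), hv⟩) hsnd)
    have hge := card_image_le_card_image_erase_add_one Prod.snd (hZB hz)
    rcases hmem' z hz with h | h
    · have := hG _ h
      omega
    · omega
  · have hsum : ∀ z ∈ Z, ∑ a ∈ B.erase z, a.2 = j := fun z hz =>
      ((hmem' z hz).resolve_left fun h => by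
        have := card_le_card (image_subset_image (f := Prod.snd) (erase_subset z B))
        have := hG _ h
        omega).2
    have := card_le_of_forall_sum_erase_eq hZB hsum
    omega

lemma sum_card_blowup (hG : ∀ E ∈ G, #E = r) :
    ∑ j, #(blowup α G r j) =
      Fintype.card β * (Fintype.card α ^ r * #G) + #(collapsedSets α β r) := by
  have hdisj (j : β) :
      Disjoint {A ∈ (univ : Finset (α × β)).powersetCard r | A.image Prod.snd ∈ G}
        {A ∈ (univ : Finset (α × β)).powersetCard r |
          #(A.image Prod.snd) + 2 ≤ r ∧ ∑ a ∈ A, a.2 = j} :=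
    disjoint_filter.2 fun A _ h h' => by have := hG _ h; omega
  simp only [blowup, filter_or, card_union_of_disjoint (hdisj _), sum_add_distrib, sum_const,
    card_univ, smul_eq_mul, card_filter_image_snd_mem hG]
  rw [collapsedSets, card_eq_sum_card_fiberwise (f := fun A : Finset (α × β) => ∑ a ∈ A, a.2)
    (t := univ) fun _ _ => mem_coe.2 (mem_univ _)]
  simp only [filter_filter]

lemma exists_le_card_blowup [Nonempty β] (hG : ∀ E ∈ G, #E = r) : ∃ j,
    Fintype.card β * (Fintype.card α ^ r * #G) + #(collapsedSets α β r) ≤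
      Fintype.card β * #(blowup α G r j) := by
  have hsum : ∑ _j : β, (Fintype.card β * (Fintype.card α ^ r * #G) + #(collapsedSets α β r)) =
      ∑ j, Fintype.card β * #(blowup α G r j) := by
    rw [← mul_sum, sum_card_blowup hG, sum_const, card_univ, smul_eq_mul]
  obtain ⟨j, -, hj⟩ := exists_le_of_sum_le univ_nonempty hsum.le
  exact ⟨j, hj⟩

end Blowup

/-- for `3 ≤ k ≤ r+1` and `t = k−1`,
`ex(tn, H_k^r) ≥ t^r ex(n, H_k^r) + (1/n)C(tn,r) − (1/n)t^r C(n,r)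
  − (1/2)t^{r−1}(t−1)C(n−1, r−2)`. -/
theorem statement16 (n r k t : ℕ) (hk : 3 ≤ k) (hkr : k ≤ r + 1)
    (ht : t = k - 1) (hn : 0 < n) :
    (t : ℝ) ^ r * (exDaisy n r k : ℝ) + (1 / (n : ℝ)) * ((t * n).choose r : ℝ) -
        (1 / (n : ℝ)) * (t : ℝ) ^ r * (n.choose r : ℝ) -
        (1 / 2) * (t : ℝ) ^ (r - 1) * ((t : ℝ) - 1) * ((n - 1).choose (r - 2) : ℝ)
      ≤ (exDaisy (t * n) r k : ℝ) := by
  have : NeZero n := ⟨hn.ne'⟩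
  obtain ⟨G, hG, hfree, hcard⟩ := exists_daisyFree_card_eq_exDaisy (V := ZMod n) (r := r)
    (by omega : 0 < k)
  obtain ⟨j, hj⟩ := exists_le_card_blowup (α := Fin t) hG
  have hblowup := card_le_exDaisy (G := blowup (Fin t) G r j) (fun _ => card_of_mem_blowup)
    (daisyFree_blowup hG hfree hk (by rw [Fintype.card_fin]; omega) j)
  have hcount := choose_card_mul_le (α := Fin t) (β := ZMod n) r
  simp only [Fintype.card_fin, ZMod.card, Fintype.card_prod] at hcard hj hblowup hcount
  have hmain : n * (t ^ r * exDaisy n r k) + (t * n).choose r ≤ n * exDaisy (t * n) r k +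
      t ^ r * n.choose r + n * (t.choose 2 * t ^ (r - 2) * (n - 1).choose (r - 2)) := by
    have := Nat.mul_le_mul_left n hblowup
    rw [hcard] at hj
    omega
  have hchoose : (t.choose 2 : ℝ) * (t : ℝ) ^ (r - 2) = 1 / 2 * (t : ℝ) ^ (r - 1) * (t - 1) := by
    rw [show r - 1 = r - 2 + 1 by omega]
    push_cast [Nat.cast_choose_two]
    ring
  have hmainR := (Nat.cast_le (α := ℝ)).2 hmain
  push_cast [hchoose] at hmainR
  have hnR : (0 : ℝ) < n := by exact_mod_cast hn
  refine le_of_mul_le_mul_left ?_ hnR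
  field_simp
  linarith
end

section
/- Let c, d be integers and x > 0 a real constant. With n = n(r) = ⌊r²/(2x)⌋, the binomial coefficient satisfies C(n − c − r·d, r) = (n^r / r!)·e^{−(2d+1)x}·(1 + o(1)) as r → ∞. -/
/-!
With `N = ⌊r²/(2x)⌋` and `m = N - c - rd`, one has
`C(m, r) / (N^r / r!) = ∏_{i<r} (m - i)/N = ∏_{i<r} (1 - aᵢ)` with `aᵢ = (c + rd + i)/N`.
Since `r²/N → 2x`, every `aᵢ` is `O(1/r)`, so `∑ aᵢ² → 0` while
`∑ aᵢ = (rc + r²d + r(r-1)/2)/N → (2d+1)x`; and `e^{-a - 2a²} ≤ 1 - a ≤ e^{-a}` for `|a| ≤ 1/2`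
squeezes the product to `e^{-(2d+1)x}`.
-/

open Filter Finset Topology

namespace Real

theorem exp_neg_sub_two_mul_sq_le_one_sub {t : ℝ} (ht : |t| ≤ 1 / 2) :
    exp (-t - 2 * t ^ 2) ≤ 1 - t := by
  -- Taylor remainder of `log (1 - t)` at order one
  have hlog := abs_le.1 (abs_log_sub_add_sum_range_le (x := t) (by linarith) 1)
  have ht' := abs_le.1 ht
  have hquad : t ^ 2 / (1 - |t|) ≤ 2 * t ^ 2 := by
    rw [div_le_iff₀ (by linarith)]
    nlinarith [sq_abs t, abs_nonneg t]
  simp only [range_one, sum_singleton, pow_one, Nat.cast_zero, zero_add, div_one, Nat.reduceAdd,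
    sq_abs] at hlog
  calc exp (-t - 2 * t ^ 2) ≤ exp (log (1 - t)) := exp_le_exp.2 (by linarith)
    _ = 1 - t := exp_log (by linarith)

end Real

theorem tendsto_prod_one_sub_of_tendsto_sum {ι κ : Type*} {l : Filter ι} {s : ι → Finset κ}
    {a : ι → κ → ℝ} {L : ℝ} (hsum : Tendsto (fun n => ∑ i ∈ s n, a n i) l (𝓝 L))
    (hsq : Tendsto (fun n => ∑ i ∈ s n, a n i ^ 2) l (𝓝 0))
    (hsmall : ∀ᶠ n in l, ∀ i ∈ s n, |a n i| ≤ 1 / 2) :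
    Tendsto (fun n => ∏ i ∈ s n, (1 - a n i)) l (𝓝 (Real.exp (-L))) := by
  have hlower : Tendsto (fun n => Real.exp (-∑ i ∈ s n, a n i - 2 * ∑ i ∈ s n, a n i ^ 2)) l
      (𝓝 (Real.exp (-L))) := by
    simpa using (hsum.neg.sub (hsq.const_mul 2)).rexp
  have hupper : Tendsto (fun n => Real.exp (-∑ i ∈ s n, a n i)) l (𝓝 (Real.exp (-L))) :=
    hsum.neg.rexp
  refine tendsto_of_tendsto_of_tendsto_of_le_of_le' hlower hupper ?_ ?_
  · filter_upwards [hsmall] with n hn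
    rw [mul_sum, ← sum_neg_distrib, ← sum_sub_distrib, Real.exp_sum]
    exact prod_le_prod (fun _ _ => (Real.exp_pos _).le)
      fun i hi => Real.exp_neg_sub_two_mul_sq_le_one_sub (hn i hi)
  · filter_upwards [hsmall] with n hn
    rw [← sum_neg_distrib, Real.exp_sum]
    exact prod_le_prod (fun i hi => by linarith [(abs_le.1 (hn i hi)).2])
      fun i _ => Real.one_sub_le_exp_neg _

theorem Nat.cast_choose_div_pow_div_factorial (m r : ℕ) (N : ℝ) :
    (m.choose r : ℝ) / (N ^ r / r.factorial) = ∏ i ∈ range r, ((m : ℝ) - i) / N := by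
  rw [Nat.cast_choose_eq_descPochhammer_div, descPochhammer_eval_eq_prod_range, prod_div_distrib,
    prod_const, card_range, div_div_div_cancel_right₀ (by positivity)]

theorem tendsto_sq_div_floor_sq_div {y : ℝ} (hy : 0 < y) :
    Tendsto (fun r : ℕ => (r : ℝ) ^ 2 / ⌊(r : ℝ) ^ 2 / y⌋₊) atTop (𝓝 y) := by
  have hsq : Tendsto (fun r : ℕ => (r : ℝ) ^ 2 / y) atTop atTop :=
    ((tendsto_pow_atTop two_ne_zero).comp tendsto_natCast_atTop_atTop).atTop_div_const hy
  have hfloor := (tendsto_nat_floor_div_atTop (R := ℝ)).comp hsq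
  have := hfloor.inv₀ one_ne_zero |>.const_mul y
  simp only [inv_one, mul_one] at this
  refine this.congr' ?_
  filter_upwards [eventually_ge_atTop 1] with r hr
  have : (r : ℝ) ≠ 0 := by positivity
  simp only [Function.comp_apply]
  field_simp

theorem abs_add_mul_add_div_le {c d r i N : ℝ} (hN : 0 < N) (hi : 0 ≤ i) (hir : i ≤ r) :
    |(c + r * d + i) / N| ≤ (|c| + (|d| + 1) * r) / N := by
  rw [abs_div, abs_of_pos hN]
  gcongr
  calc |c + r * d + i| ≤ |c| + r * |d| + i := by
        grw [abs_add_le, abs_add_le, abs_mul, abs_of_nonneg hi, abs_of_nonneg (hi.trans hir)]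
    _ ≤ |c| + (|d| + 1) * r := by linarith

section SqDiv

variable {N : ℕ → ℝ} {y : ℝ} (hN : Tendsto (fun r : ℕ => (r : ℝ) ^ 2 / N r) atTop (𝓝 y))
include hN

theorem tendsto_natCast_div_of_tendsto_sq_div :
    Tendsto (fun r : ℕ => (r : ℝ) / N r) atTop (𝓝 0) := by
  have := hN.mul tendsto_inv_atTop_nhds_zero_nat
  rw [mul_zero] at this
  refine this.congr' ?_
  filter_upwards [eventually_ne_atTop 0] with r hr
  field_simp

theorem tendsto_inv_of_tendsto_sq_div : Tendsto (fun r : ℕ => (N r)⁻¹) atTop (𝓝 0) := by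
  have := (tendsto_natCast_div_of_tendsto_sq_div hN).mul tendsto_inv_atTop_nhds_zero_nat
  rw [mul_zero] at this
  refine this.congr' ?_
  filter_upwards [eventually_ne_atTop 0] with r hr
  field_simp

theorem eventually_pos_of_tendsto_sq_div (hy : 0 < y) : ∀ᶠ r in atTop, 0 < N r := by
  filter_upwards [hN.eventually (lt_mem_nhds hy), eventually_ne_atTop 0] with r hr hr0
  have : (0 : ℝ) < (r : ℝ) ^ 2 := by positivity
  exact (div_pos_iff_of_pos_left this).1 hr

variable (c d : ℝ)

theorem eventually_add_mul_le_of_tendsto_sq_div (hy : 0 < y) :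
    ∀ᶠ r : ℕ in atTop, c + r * d ≤ N r := by
  have hlim : Tendsto (fun r : ℕ => c * (N r)⁻¹ + d * (r / N r)) atTop (𝓝 0) := by
    simpa using ((tendsto_inv_of_tendsto_sq_div hN).const_mul c).add
      ((tendsto_natCast_div_of_tendsto_sq_div hN).const_mul d)
  filter_upwards [eventually_pos_of_tendsto_sq_div hN hy, hlim.eventually (ge_mem_nhds one_pos)]
    with r hpos hle
  rw [← div_le_one hpos]
  convert hle using 1
  ring

theorem tendsto_sum_add_mul_add_div :
    Tendsto (fun r : ℕ => ∑ i ∈ range r, (c + r * d + i) / N r) atTop (𝓝 ((d + 1 / 2) * y)) := by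
  have hr := tendsto_natCast_div_of_tendsto_sq_div hN
  have hlim := ((hr.const_mul c).add (hN.const_mul (d + 1 / 2))).sub (hr.const_mul (1 / 2))
  rw [mul_zero, zero_add, mul_zero, sub_zero] at hlim
  refine hlim.congr fun r => ?_
  have hgauss : ∑ i ∈ range r, (i : ℝ) = r * (r - 1) / 2 := by
    induction r with
    | zero => simp
    | succ n ih => rw [sum_range_succ, ih]; push_cast; ring
  rw [← sum_div, sum_add_distrib, sum_const, card_range, nsmul_eq_mul, hgauss]
  ring

theorem tendsto_abs_add_mul_div :
    Tendsto (fun r : ℕ => (|c| + (|d| + 1) * r) / N r) atTop (𝓝 0) := by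
  have := ((tendsto_inv_of_tendsto_sq_div hN).const_mul |c|).add
    ((tendsto_natCast_div_of_tendsto_sq_div hN).const_mul (|d| + 1))
  rw [mul_zero, mul_zero, add_zero] at this
  exact this.congr fun r => by ring

theorem eventually_abs_add_mul_add_div_le (hy : 0 < y) {ε : ℝ} (hε : 0 < ε) :
    ∀ᶠ r : ℕ in atTop, ∀ i ∈ range r, |(c + r * d + i) / N r| ≤ ε := by
  filter_upwards [eventually_pos_of_tendsto_sq_div hN hy,
    (tendsto_abs_add_mul_div hN c d).eventually (ge_mem_nhds hε)] with r hpos hle i hi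
  exact (abs_add_mul_add_div_le hpos i.cast_nonneg (by exact_mod_cast (mem_range.1 hi).le)).trans hle

theorem tendsto_sum_sq_add_mul_add_div (hy : 0 < y) :
    Tendsto (fun r : ℕ => ∑ i ∈ range r, ((c + r * d + i) / N r) ^ 2) atTop (𝓝 0) := by
  set u := fun r : ℕ => (|c| + (|d| + 1) * r) / N r
  have hu := tendsto_abs_add_mul_div hN c d
  have hru : Tendsto (fun r : ℕ => r * u r * u r) atTop (𝓝 0) := by
    have hr := tendsto_natCast_div_of_tendsto_sq_div hN
    have := ((hr.const_mul |c|).add (hN.const_mul (|d| + 1))).mul hu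
    rw [mul_zero] at this
    exact this.congr fun r => by simp only [u]; ring
  refine squeeze_zero' (.of_forall fun r => by positivity) ?_ hru
  filter_upwards [eventually_pos_of_tendsto_sq_div hN hy] with r hpos
  calc ∑ i ∈ range r, ((c + r * d + i) / N r) ^ 2 ≤ ∑ _i ∈ range r, u r ^ 2 := by
        refine sum_le_sum fun i hi => ?_
        rw [← sq_abs]
        exact pow_le_pow_left₀ (abs_nonneg _)
          (abs_add_mul_add_div_le hpos i.cast_nonneg (by exact_mod_cast (mem_range.1 hi).le)) 2
    _ = r * u r * u r := by rw [sum_const, card_range, nsmul_eq_mul]; ring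

end SqDiv

/-- for fixed integers `c, d` and real `x > 0`, with
`n = n(r) = ⌊r²/(2x)⌋`, one has
`C(n − c − rd, r) = (n^r / r!)·e^{−(2d+1)x}·(1 + o(1))` as `r → ∞`. -/
theorem statement18 (c d : ℤ) (x : ℝ) (hx : 0 < x) :
    Filter.Tendsto
      (fun r : ℕ =>
        ((((⌊(r : ℝ) ^ 2 / (2 * x)⌋₊ : ℤ) - c - r * d).toNat.choose r : ℝ) /
          ((⌊(r : ℝ) ^ 2 / (2 * x)⌋₊ : ℝ) ^ r / (r.factorial : ℝ))))
      Filter.atTop (nhds (Real.exp (-((2 * (d : ℝ) + 1) * x)))) := by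
  have h2x : 0 < 2 * x := by positivity
  have hN := tendsto_sq_div_floor_sq_div h2x
  have hprod := tendsto_prod_one_sub_of_tendsto_sum (tendsto_sum_add_mul_add_div hN c d)
    (tendsto_sum_sq_add_mul_add_div hN c d h2x)
    (eventually_abs_add_mul_add_div_le hN c d h2x one_half_pos)
  rw [show (d + 1 / 2) * (2 * x) = (2 * (d : ℝ) + 1) * x by ring] at hprod
  refine hprod.congr' ?_
  filter_upwards [eventually_pos_of_tendsto_sq_div hN h2x,
    eventually_add_mul_le_of_tendsto_sq_div hN c d h2x] with r hpos hle
  have hle' : c + r * d ≤ (⌊(r : ℝ) ^ 2 / (2 * x)⌋₊ : ℤ) := by exact_mod_cast hle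
  have hm : (((⌊(r : ℝ) ^ 2 / (2 * x)⌋₊ : ℤ) - c - r * d).toNat : ℝ) =
      ⌊(r : ℝ) ^ 2 / (2 * x)⌋₊ - c - r * d := by
    rw [← Int.cast_natCast, Int.toNat_of_nonneg (by linarith)]
    push_cast
    ring
  rw [Nat.cast_choose_div_pow_div_factorial, hm]
  refine prod_congr rfl fun i _ => ?_
  field_simp
  ring
end
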